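/- Let γ = 0 and d = 0. For every L > 0 the equation L = (π − arccos(1−h)) / √(2h) has a unique solution h ∈ (0,2), and there is a unique pinned fluxon φ_pin for parameters (L, 0, 0). Explicitly, letting x* ∈ ℝ be such that φ₀(−L + x*) = arccos(1−h), the pinned fluxon is given by φ_pin(x) = φ₀(x + x*) for x ≤ −L, φ_pin(x) = π + ((π − arccos(1−h))/L) · x for |x| ≤ L, and φ_pin(x) = φ₀(x − x*) for x ≥ L. -/

import Mathlib

open Real Filter Topology

/-- The piecewise-constant Josephson tunneling critical current:
`D(x) = d` for `|x| < L` and `D(x) = 1` for `|x| > L`. -/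
noncomputable def Dfun (L d : ℝ) (x : ℝ) : ℝ := if |x| < L then d else 1

/-- A pinned fluxon for parameters `(L, d, γ)`. -/
def IsPinnedFluxon (L d γ : ℝ) (φ : ℝ → ℝ) : Prop :=
  ContDiff ℝ 1 φ ∧
  (∀ x : ℝ, x ≠ -L → x ≠ L →
    ∃ φ'' : ℝ, HasDerivAt (deriv φ) φ'' x ∧
      φ'' - Dfun L d x * Real.sin (φ x) + γ = 0) ∧
  Tendsto φ atBot (𝓝 (Real.arcsin γ)) ∧
  Tendsto φ atTop (𝓝 (Real.arcsin γ + 2 * π)) ∧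
  Tendsto (deriv φ) atBot (𝓝 0) ∧
  Tendsto (deriv φ) atTop (𝓝 0)

/-- The stationary sine-Gordon fluxon `φ₀(ξ) = 4 arctan(e^ξ)`. -/
noncomputable def φ₀ (ξ : ℝ) : ℝ := 4 * Real.arctan (Real.exp ξ)

/-!
On each tail `|x| > L` the equation is `φ'' = sin φ`, and conservation of the energy
`φ'² / 2 + cos φ` together with the limits at `±∞` gives `φ'² = 4 sin² (φ / 2)`. The sign in
`φ' = ± 2 sin (φ / 2)` cannot change along a tail, and the solutions of this first-order equation
are translates of `φ₀`, the equilibrium `2π`, and `2π` plus a reflected translate of `φ₀`. The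
limits at `±∞` and the affine profile inside the defect (where `φ'' = 0`) leave only translates
of `φ₀` on both tails. Matching `φ` and `φ'` at `±L` then gives `φ(L) = 2π - φ(-L)`, so the edge
value `θ = φ(-L) ∈ (0, π)` solves `2 L sin (θ / 2) = π - θ`. The map `θ ↦ 2 L sin (θ / 2) + θ` is
strictly increasing, so `θ` is unique, and `h = 1 - cos θ` turns this into the length equation
because `√(2h) = 2 sin (θ / 2)`.
-/

open Set

lemma sin_eq_two_mul_sin_half_mul_cos_half (x : ℝ) : sin x = 2 * sin (x / 2) * cos (x / 2) := by
  rw [← sin_two_mul, mul_div_cancel₀ x two_ne_zero]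

lemma add_eq_pi_of_sin_eq_sin {x y : ℝ} (hx : 0 < x) (hy : y < π) (hxy : x < y)
    (h : sin x = sin y) : x + y = π := by
  have hsin : sin ((x - y) / 2) ≠ 0 :=
    (sin_neg_of_neg_of_neg_pi_lt (by linarith) (by linarith)).ne
  have hcos : cos ((x + y) / 2) = 0 := by
    have := sin_sub_sin x y
    rw [h, sub_self] at this
    exact (mul_eq_zero.1 this.symm).resolve_left (mul_ne_zero two_ne_zero hsin)
  have := injOn_cos ⟨by linarith, by linarith⟩ ⟨by linarith [pi_pos], by linarith [pi_pos]⟩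
    (hcos.trans cos_pi_div_two.symm)
  linarith

lemma tendsto_two_sin_half {α : Type*} {l : Filter α} {f : α → ℝ} {c : ℝ}
    (hf : Tendsto f l (𝓝 c)) : Tendsto (fun x => 2 * sin (f x / 2)) l (𝓝 (2 * sin (c / 2))) :=
  ((continuous_sin.tendsto _).comp (hf.div_const 2)).const_mul 2

lemma eq_of_hasDerivAt_zero_on_Ioo {f : ℝ → ℝ} {a b : ℝ} (hab : a ≤ b)
    (hf : ContinuousOn f (Icc a b)) (hf' : ∀ x ∈ Ioo a b, HasDerivAt f 0 x) : f b = f a := by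
  rcases hab.eq_or_lt with rfl | hab
  · rfl
  obtain ⟨c, -, hc⟩ := exists_hasDerivAt_eq_slope f (fun _ => 0) hab hf hf'
  rw [eq_comm, div_eq_zero_iff, sub_eq_zero] at hc
  exact hc.resolve_right (sub_ne_zero.2 hab.ne')

lemma eq_of_hasDerivAt_zero_of_tendsto {f : ℝ → ℝ} {L c x : ℝ} (hf : ContinuousOn f (Ici L))
    (hf' : ∀ y, L < y → HasDerivAt f 0 y) (hlim : Tendsto f atTop (𝓝 c)) (hx : L ≤ x) :
    f x = c := by
  refine tendsto_nhds_unique (tendsto_const_nhds.congr' ?_) hlim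
  filter_upwards [eventually_ge_atTop x] with y hy
  exact (eq_of_hasDerivAt_zero_on_Ioo hy (hf.mono fun t ht => hx.trans ht.1)
    fun t ht => hf' t (hx.trans_lt ht.1)).symm

lemma eqOn_Ioi_of_hasDerivAt {v : ℝ → ℝ → ℝ} {K : NNReal} (hv : ∀ t, LipschitzWith K (v t))
    {f g : ℝ → ℝ} {L x₀ : ℝ} (hx₀ : L < x₀) (hf : ∀ t, L < t → HasDerivAt f (v t (f t)) t)
    (hg : ∀ t, L < t → HasDerivAt g (v t (g t)) t) (heq : f x₀ = g x₀) : EqOn f g (Ioi L) :=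
  fun x (hx : L < x) => ODE_solution_unique_of_mem_Ioo (s := fun _ => univ) (b := max x x₀ + 1)
    (fun t _ => (hv t).lipschitzOnWith) ⟨hx₀, by linarith [le_max_right x x₀]⟩
    (fun t ht => ⟨hf t ht.1, trivial⟩) (fun t ht => ⟨hg t ht.1, trivial⟩) heq
    ⟨hx, by linarith [le_max_left x x₀]⟩

lemma Set.EqOn.Ici_of_Ioi {f g : ℝ → ℝ} {L : ℝ} (h : EqOn f g (Ioi L)) (hf : Continuous f)
    (hg : Continuous g) : EqOn f g (Ici L) :=
  h.of_subset_closure hf.continuousOn hg.continuousOn Ioi_subset_Ici_self (by rw [closure_Ioi])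

lemma lipschitzWith_two_sin_half : LipschitzWith 1 fun y : ℝ => 2 * sin (y / 2) := by
  refine LipschitzWith.of_dist_le_mul fun x y => ?_
  rw [dist_eq, dist_eq, ← mul_sub, abs_mul, abs_two, NNReal.coe_one, one_mul]
  linarith [abs_sin_sub_sin_le (x / 2) (y / 2),
    show |x / 2 - y / 2| = |x - y| / 2 by rw [← sub_div, abs_div, abs_two]]

lemma hasDerivAt_of_eqOn_Iic_of_eqOn_Ici {F f g f' g' : ℝ → ℝ} {a : ℝ}
    (hf : ∀ x, HasDerivAt f (f' x) x) (hg : ∀ x, HasDerivAt g (g' x) x)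
    (hFf : EqOn F f (Iic a)) (hFg : EqOn F g (Ici a)) (ha : f' a = g' a) (x : ℝ) :
    HasDerivAt F (if x ≤ a then f' x else g' x) x := by
  rcases lt_trichotomy x a with hx | rfl | hx
  · rw [if_pos hx.le]
    exact (hf x).congr_of_eventuallyEq (eventually_of_mem (Iic_mem_nhds hx) hFf)
  · rw [if_pos le_rfl]
    have := ((hf x).hasDerivWithinAt.congr hFf (hFf (le_refl x))).union
      ((ha ▸ hg x).hasDerivWithinAt.congr hFg (hFg (le_refl x)))
    rwa [Iic_union_Ici, hasDerivWithinAt_univ] at this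
  · rw [if_neg hx.not_ge]
    exact (hg x).congr_of_eventuallyEq
      (eventually_of_mem (Ioi_mem_nhds hx) fun y (hy : a < y) => hFg hy.le)

lemma two_sin_half_φ₀ (ξ : ℝ) :
    2 * sin (φ₀ ξ / 2) = 4 * exp ξ / (1 + exp ξ ^ 2) := by
  have hsq : √(1 + exp ξ ^ 2) ^ 2 = 1 + exp ξ ^ 2 := sq_sqrt (by positivity)
  have hpos : 0 < √(1 + exp ξ ^ 2) := sqrt_pos.2 (by positivity)
  rw [φ₀, show 4 * arctan (exp ξ) / 2 = 2 * arctan (exp ξ) by ring, sin_two_mul, sin_arctan,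
    cos_arctan]
  field_simp
  rw [hsq]
  ring

lemma hasDerivAt_φ₀ (ξ : ℝ) : HasDerivAt φ₀ (2 * sin (φ₀ ξ / 2)) ξ := by
  rw [two_sin_half_φ₀]
  refine (((hasDerivAt_arctan (exp ξ)).comp ξ (hasDerivAt_exp ξ)).const_mul 4).congr_deriv ?_
  field_simp

lemma hasDerivAt_two_sin_half_φ₀ (ξ : ℝ) :
    HasDerivAt (fun ξ => 2 * sin (φ₀ ξ / 2)) (sin (φ₀ ξ)) ξ := by
  refine ((((hasDerivAt_φ₀ ξ).div_const 2).sin).const_mul 2).congr_deriv ?_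
  rw [sin_eq_two_mul_sin_half_mul_cos_half (φ₀ ξ)]
  ring

@[fun_prop]
lemma continuous_φ₀ : Continuous φ₀ :=
  continuous_iff_continuousAt.2 fun ξ => (hasDerivAt_φ₀ ξ).continuousAt

lemma φ₀_pos (ξ : ℝ) : 0 < φ₀ ξ := by
  have := arctan_strictMono (exp_pos ξ)
  rw [arctan_zero] at this
  unfold φ₀; linarith

lemma φ₀_lt_two_pi (ξ : ℝ) : φ₀ ξ < 2 * π := by
  have := arctan_lt_pi_div_two (exp ξ)
  unfold φ₀; linarith

lemma φ₀_strictMono : StrictMono φ₀ := fun _ _ hab => by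
  have := arctan_strictMono (exp_lt_exp.2 hab)
  unfold φ₀; linarith

lemma φ₀_neg (ξ : ℝ) : φ₀ (-ξ) = 2 * π - φ₀ ξ := by
  rw [φ₀, φ₀, exp_neg, arctan_inv_of_pos (exp_pos ξ)]
  ring

lemma sin_half_φ₀_pos (ξ : ℝ) : 0 < sin (φ₀ ξ / 2) :=
  sin_pos_of_pos_of_lt_pi (by linarith [φ₀_pos ξ]) (by linarith [φ₀_lt_two_pi ξ])

lemma exists_φ₀_eq {y : ℝ} (hy : y ∈ Ioo 0 (2 * π)) : ∃ ξ, φ₀ ξ = y := by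
  have htan : 0 < tan (y / 4) := tan_pos_of_pos_of_lt_pi_div_two (by linarith [hy.1])
    (by linarith [hy.2])
  refine ⟨log (tan (y / 4)), ?_⟩
  rw [φ₀, exp_log htan, arctan_tan (by linarith [hy.1, pi_pos]) (by linarith [hy.2])]
  ring

lemma tendsto_φ₀_atBot : Tendsto φ₀ atBot (𝓝 0) := by
  have := ((continuous_arctan.tendsto 0).comp tendsto_exp_atBot).const_mul (4 : ℝ)
  rwa [arctan_zero, mul_zero] at this

lemma tendsto_φ₀_atTop : Tendsto φ₀ atTop (𝓝 (2 * π)) := by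
  have := ((tendsto_nhds_of_tendsto_nhdsWithin tendsto_arctan_atTop).comp
    tendsto_exp_atTop).const_mul (4 : ℝ)
  rwa [show 4 * (π / 2) = 2 * π by ring] at this

lemma sin_half_φ₀_neg (ξ : ℝ) : sin (φ₀ (-ξ) / 2) = sin (φ₀ ξ / 2) := by
  rw [φ₀_neg, show (2 * π - φ₀ ξ) / 2 = π - φ₀ ξ / 2 by ring, sin_pi_sub]

lemma hasDerivAt_φ₀_comp_affine (a r x : ℝ) :
    HasDerivAt (fun x => φ₀ (a * x + r)) (a * (2 * sin (φ₀ (a * x + r) / 2))) x :=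
  ((hasDerivAt_φ₀ _).comp x (((hasDerivAt_id x).const_mul a).add_const r)).congr_deriv
    (by simp only [id, mul_one]; ring)

lemma strictMonoOn_pinningAngle {L : ℝ} (hL : 0 ≤ L) :
    StrictMonoOn (fun θ => 2 * L * sin (θ / 2) + θ) (Icc 0 π) := by
  intro θ₁ hθ₁ θ₂ hθ₂ hlt
  have : sin (θ₁ / 2) ≤ sin (θ₂ / 2) :=
    sin_le_sin_of_le_of_le_pi_div_two (by linarith [hθ₁.1, pi_pos]) (by linarith [hθ₂.2])
      (by linarith)
  dsimp only
  nlinarith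

lemma existsUnique_pinningAngle {L : ℝ} (hL : 0 < L) :
    ∃! θ, θ ∈ Ioo 0 π ∧ 2 * L * sin (θ / 2) = π - θ := by
  have hcont : ContinuousOn (fun θ => 2 * L * sin (θ / 2) + θ) (Icc 0 π) := by fun_prop
  obtain ⟨θ, hθ, hθeq⟩ := intermediate_value_Icc pi_pos.le hcont
    (show π ∈ Icc (2 * L * sin (0 / 2) + 0) (2 * L * sin (π / 2) + π) by
      simp only [zero_div, sin_zero, sin_pi_div_two]; constructor <;> linarith [pi_pos])
  have hLθ : 2 * L * sin (θ / 2) = π - θ := by linarith [hθeq]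
  have hθ0 : θ ≠ 0 := by rintro rfl; simp only [zero_div, sin_zero] at hLθ; linarith [pi_pos]
  have hθπ : θ ≠ π := by rintro rfl; simp only [sin_pi_div_two] at hLθ; linarith
  refine ⟨θ, ⟨⟨hθ.1.lt_of_ne' hθ0, hθ.2.lt_of_ne hθπ⟩, hLθ⟩, fun θ' ⟨hθ', hθ'eq⟩ => ?_⟩
  exact (strictMonoOn_pinningAngle hL.le).injOn (Ioo_subset_Icc_self hθ') hθ
    (show 2 * L * sin (θ' / 2) + θ' = 2 * L * sin (θ / 2) + θ by linarith)

lemma sqrt_two_mul_eq_two_sin_half_arccos {h : ℝ} (hh : h ∈ Icc 0 2) :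
    √(2 * h) = 2 * sin (arccos (1 - h) / 2) := by
  rw [sin_half_eq_sqrt (arccos_nonneg _) (by linarith [arccos_le_pi (1 - h), pi_pos]),
    cos_arccos (by linarith [hh.2]) (by linarith [hh.1]),
    show 2 * h = 2 ^ 2 * ((1 - (1 - h)) / 2) by ring, sqrt_mul (by norm_num),
    sqrt_sq (by norm_num)]

lemma pinningLength_eq_iff {L h : ℝ} (hh : h ∈ Ioo 0 2) :
    L = (π - arccos (1 - h)) / √(2 * h) ↔
      2 * L * sin (arccos (1 - h) / 2) = π - arccos (1 - h) := by
  rw [sqrt_two_mul_eq_two_sin_half_arccos (Ioo_subset_Icc_self hh), eq_div_iff]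
  · constructor <;> intro h <;> linarith
  · rw [← sqrt_two_mul_eq_two_sin_half_arccos (Ioo_subset_Icc_self hh)]
    exact (sqrt_pos.2 (by linarith [hh.1])).ne'

lemma existsUnique_pinningLength {L : ℝ} (hL : 0 < L) :
    ∃! h, h ∈ Ioo 0 2 ∧ L = (π - arccos (1 - h)) / √(2 * h) := by
  obtain ⟨θ, ⟨hθ, hLθ⟩, -⟩ := existsUnique_pinningAngle hL
  have hh : 1 - cos θ ∈ Ioo 0 2 := by
    constructor
    · linarith [cos_lt_cos_of_nonneg_of_le_pi le_rfl hθ.2.le hθ.1, cos_zero]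
    · linarith [cos_lt_cos_of_nonneg_of_le_pi hθ.1.le le_rfl hθ.2, cos_pi]
  have harccos : arccos (1 - (1 - cos θ)) = θ := by
    rw [sub_sub_cancel, arccos_cos hθ.1.le hθ.2.le]
  refine ⟨1 - cos θ, ⟨hh, (pinningLength_eq_iff hh).2 (by rwa [harccos])⟩, ?_⟩
  rintro h ⟨hh', hLh⟩
  have hangle : arccos (1 - h) = θ := (strictMonoOn_pinningAngle hL.le).injOn
    ⟨arccos_nonneg _, arccos_le_pi _⟩ (Ioo_subset_Icc_self hθ)
    (show 2 * L * sin (arccos (1 - h) / 2) + arccos (1 - h) = 2 * L * sin (θ / 2) + θ by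
      linarith [(pinningLength_eq_iff hh').1 hLh])
  have := arccos_injOn (show 1 - h ∈ Icc (-1) 1 from ⟨by linarith [hh'.2], by linarith [hh'.1]⟩)
    (show 1 - (1 - cos θ) ∈ Icc (-1) 1 from ⟨by linarith [hh.2], by linarith [hh.1]⟩)
    (hangle.trans harccos.symm)
  linarith

lemma Dfun_of_abs_lt {L d x : ℝ} (hx : |x| < L) : Dfun L d x = d := if_pos hx

lemma Dfun_of_le_abs {L d x : ℝ} (hx : L ≤ |x|) : Dfun L d x = 1 := if_neg hx.not_gt

/-- The profile of the statement, with `θ = arccos (1 - h)` its value at `-L`. -/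
noncomputable def pinnedProfile (L θ xs : ℝ) : ℝ → ℝ := fun x =>
  if x ≤ -L then φ₀ (x + xs)
  else if x < L then π + ((π - θ) / L) * x
  else φ₀ (x - xs)

noncomputable def pinnedProfileDeriv (L θ xs : ℝ) (x : ℝ) : ℝ :=
  if x ≤ -L then 2 * sin (φ₀ (x + xs) / 2)
  else if x ≤ L then 2 * sin (θ / 2)
  else 2 * sin (φ₀ (x - xs) / 2)

section PinnedProfile

variable {L θ xs : ℝ}

lemma φ₀_sub_of_φ₀_neg_add (hxs : φ₀ (-L + xs) = θ) : φ₀ (L - xs) = 2 * π - θ := by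
  rw [show L - xs = -(-L + xs) by ring, φ₀_neg, hxs]

lemma sin_half_φ₀_sub_of_φ₀_neg_add (hxs : φ₀ (-L + xs) = θ) :
    sin (φ₀ (L - xs) / 2) = sin (θ / 2) := by
  rw [show L - xs = -(-L + xs) by ring, sin_half_φ₀_neg, hxs]

lemma hasDerivAt_pinnedProfile (hL : 0 < L) (hLθ : 2 * L * sin (θ / 2) = π - θ)
    (hxs : φ₀ (-L + xs) = θ) (x : ℝ) :
    HasDerivAt (pinnedProfile L θ xs) (pinnedProfileDeriv L θ xs x) x := by
  have hxs' := φ₀_sub_of_φ₀_neg_add hxs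
  have hslope : (π - θ) / L = 2 * sin (θ / 2) := by field_simp; linarith
  have hmid (y : ℝ) : HasDerivAt (fun y => π + (π - θ) / L * y) (2 * sin (θ / 2)) y := by
    simpa [hslope] using ((hasDerivAt_id y).const_mul ((π - θ) / L)).const_add π
  have hinner := hasDerivAt_of_eqOn_Iic_of_eqOn_Ici (F := fun y => if y < L then
      π + (π - θ) / L * y else φ₀ (y - xs)) hmid (fun y => (hasDerivAt_φ₀ _).comp_sub_const y xs)
    (fun y (hy : y ≤ L) => by
      rcases hy.lt_or_eq with hy | rfl
      · simp only [if_pos hy]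
      · simp only [lt_irrefl, if_false, hxs']
        field_simp; ring)
    (fun y (hy : L ≤ y) => by simp only [if_neg hy.not_gt])
    (by rw [sin_half_φ₀_sub_of_φ₀_neg_add hxs])
  refine hasDerivAt_of_eqOn_Iic_of_eqOn_Ici (fun y => (hasDerivAt_φ₀ _).comp_add_const y xs)
    hinner (fun y (hy : y ≤ -L) => if_pos hy) (fun y (hy : -L ≤ y) => ?_)
    (by simp only [if_pos (neg_le_self hL.le), hxs]) x
  rcases hy.lt_or_eq with hy | rfl
  · exact if_neg hy.not_ge
  · simp only [le_refl, if_true, if_pos (neg_lt_self hL), hxs]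
    field_simp; ring

lemma continuous_pinnedProfileDeriv (hL : 0 < L) (hxs : φ₀ (-L + xs) = θ) :
    Continuous (pinnedProfileDeriv L θ xs) := by
  have hφ₀' : Continuous fun ξ => 2 * sin (φ₀ ξ / 2) := by fun_prop
  refine (hφ₀'.comp (continuous_add_const xs)).if_le ((continuous_const.if_le
    (hφ₀'.comp (continuous_sub_right xs)) continuous_id continuous_const ?_)) continuous_id
    continuous_const ?_
  · rintro x rfl
    rw [sin_half_φ₀_sub_of_φ₀_neg_add hxs]
  · rintro x rfl
    simp only [Function.comp_apply, if_pos (neg_le_self hL.le), hxs]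

lemma hasDerivAt_pinnedProfileDeriv (hL : 0 < L) {x : ℝ} (hx : x ≠ -L) (hx' : x ≠ L) :
    HasDerivAt (pinnedProfileDeriv L θ xs) (Dfun L 0 x * sin (pinnedProfile L θ xs x)) x := by
  rcases lt_trichotomy x (-L) with hlt | rfl | hgt
  · rw [Dfun_of_le_abs (by rw [abs_of_neg (by linarith)]; linarith), one_mul, pinnedProfile,
      if_pos hlt.le]
    exact ((hasDerivAt_two_sin_half_φ₀ _).comp_add_const x xs).congr_of_eventuallyEq
      (eventually_of_mem (Iio_mem_nhds hlt) fun y (hy : y < -L) => if_pos hy.le)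
  · exact absurd rfl hx
  rcases lt_trichotomy x L with hlt | rfl | hgt'
  · rw [Dfun_of_abs_lt (abs_lt.2 ⟨hgt, hlt⟩), zero_mul]
    exact (hasDerivAt_const x (2 * sin (θ / 2))).congr_of_eventuallyEq
      (eventually_of_mem (Ioo_mem_nhds hgt hlt) fun y (hy : y ∈ Ioo (-L) L) => by
        simp only [pinnedProfileDeriv, if_neg hy.1.not_ge, if_pos hy.2.le])
  · exact absurd rfl hx'
  · rw [Dfun_of_le_abs (by rw [abs_of_pos (by linarith)]; linarith), one_mul, pinnedProfile,
      if_neg (by linarith), if_neg hgt'.not_gt]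
    exact ((hasDerivAt_two_sin_half_φ₀ _).comp_sub_const x xs).congr_of_eventuallyEq
      (eventually_of_mem (Ioi_mem_nhds hgt') fun y (hy : L < y) => by
        simp only [pinnedProfileDeriv, if_neg (show ¬ y ≤ -L by linarith), if_neg hy.not_ge])

theorem isPinnedFluxon_pinnedProfile (hL : 0 < L) (hLθ : 2 * L * sin (θ / 2) = π - θ)
    (hxs : φ₀ (-L + xs) = θ) : IsPinnedFluxon L 0 0 (pinnedProfile L θ xs) := by
  have hderiv : deriv (pinnedProfile L θ xs) = pinnedProfileDeriv L θ xs :=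
    funext fun x => (hasDerivAt_pinnedProfile hL hLθ hxs x).deriv
  have hleft : pinnedProfile L θ xs =ᶠ[atBot] fun x => φ₀ (x + xs) :=
    eventually_le_atBot (-L) |>.mono fun x hx => if_pos hx
  have hright : pinnedProfile L θ xs =ᶠ[atTop] fun x => φ₀ (x - xs) :=
    eventually_gt_atTop L |>.mono fun x hx => by
      simp only [pinnedProfile, if_neg (show ¬ x ≤ -L by linarith), if_neg hx.not_gt]
  have hleft' : pinnedProfileDeriv L θ xs =ᶠ[atBot] fun x => 2 * sin (φ₀ (x + xs) / 2) :=
    eventually_le_atBot (-L) |>.mono fun x hx => if_pos hx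
  have hright' : pinnedProfileDeriv L θ xs =ᶠ[atTop] fun x => 2 * sin (φ₀ (x - xs) / 2) :=
    eventually_gt_atTop L |>.mono fun x hx => by
      simp only [pinnedProfileDeriv, if_neg (show ¬ x ≤ -L by linarith), if_neg hx.not_ge]
  have hbot : Tendsto (fun x => φ₀ (x + xs)) atBot (𝓝 0) :=
    tendsto_φ₀_atBot.comp (tendsto_atBot_add_const_right _ xs tendsto_id)
  have htop : Tendsto (fun x => φ₀ (x - xs)) atTop (𝓝 (2 * π)) :=
    tendsto_φ₀_atTop.comp (tendsto_atTop_add_const_right _ (-xs) tendsto_id)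
  refine ⟨contDiff_one_iff_deriv.2
    ⟨fun x => (hasDerivAt_pinnedProfile hL hLθ hxs x).differentiableAt,
      hderiv ▸ continuous_pinnedProfileDeriv hL hxs⟩,
    fun x hx hx' => ⟨_, hderiv ▸ hasDerivAt_pinnedProfileDeriv hL hx hx', by ring⟩, ?_, ?_, ?_, ?_⟩
  · rw [arcsin_zero]; exact hbot.congr' hleft.symm
  · rw [arcsin_zero, zero_add]; exact htop.congr' hright.symm
  · rw [hderiv]
    simpa using (tendsto_two_sin_half hbot).congr' hleft'.symm
  · rw [hderiv]
    simpa using (tendsto_two_sin_half htop).congr' hright'.symm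

end PinnedProfile

theorem eqOn_of_hasDerivAt_mul_two_sin_half {σ : ℝ} {ψ : ℝ → ℝ}
    {L X : ℝ} (hX : L < X) (hψX : ψ X ∈ Ioo 0 (4 * π))
    (hψ : ∀ x, L < x → HasDerivAt ψ (σ * (2 * sin (ψ x / 2))) x) :
    (∃ r, EqOn ψ (fun x => φ₀ (σ * x + r)) (Ioi L)) ∨ EqOn ψ (fun _ => 2 * π) (Ioi L) ∨
      ∃ r, EqOn ψ (fun x => 2 * π + φ₀ (-σ * x + r)) (Ioi L) := by
  have huniq (g : ℝ → ℝ) (hg : ∀ x, HasDerivAt g (σ * (2 * sin (g x / 2))) x) (hgX : g X = ψ X) :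
      EqOn ψ g (Ioi L) :=
    eqOn_Ioi_of_hasDerivAt (fun _ => (lipschitzWith_smul σ).comp lipschitzWith_two_sin_half) hX
      hψ (fun x _ => hg x) hgX.symm
  rcases lt_trichotomy (ψ X) (2 * π) with hlt | heq | hgt
  · obtain ⟨ξ, hξ⟩ := exists_φ₀_eq ⟨hψX.1, hlt⟩
    refine Or.inl ⟨ξ - σ * X, huniq _ (fun x => hasDerivAt_φ₀_comp_affine σ _ x) ?_⟩
    simp only [add_sub_cancel, hξ]
  · refine Or.inr (Or.inl (huniq _ (fun x => ?_) heq.symm))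
    simpa [mul_div_cancel_left₀ π two_ne_zero] using hasDerivAt_const x (2 * π)
  · obtain ⟨ξ, hξ⟩ := exists_φ₀_eq (y := ψ X - 2 * π) ⟨by linarith, by linarith [hψX.2]⟩
    refine Or.inr (Or.inr ⟨ξ + σ * X, huniq _ (fun x => ?_) ?_⟩)
    · refine ((hasDerivAt_φ₀_comp_affine (-σ) _ x).const_add (2 * π)).congr_deriv ?_
      rw [show (2 * π + φ₀ (-σ * x + (ξ + σ * X))) / 2 = φ₀ (-σ * x + (ξ + σ * X)) / 2 + π by ring,
        sin_add_pi]
      ring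
    · rw [show -σ * X + (ξ + σ * X) = ξ by ring, hξ]
      ring

section Tail

variable {ψ : ℝ → ℝ} {L : ℝ}

lemma deriv_sq_eq_of_tendsto (hψ : Differentiable ℝ ψ) (hψ' : Continuous (deriv ψ))
    (hode : ∀ x, L < x → HasDerivAt (deriv ψ) (sin (ψ x)) x)
    (hlim : Tendsto ψ atTop (𝓝 (2 * π))) (hlim' : Tendsto (deriv ψ) atTop (𝓝 0)) {x : ℝ}
    (hx : L ≤ x) : deriv ψ x ^ 2 = (2 * sin (ψ x / 2)) ^ 2 := by
  have henergy : deriv ψ x ^ 2 / 2 + cos (ψ x) = 1 := by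
    refine eq_of_hasDerivAt_zero_of_tendsto (f := fun y => deriv ψ y ^ 2 / 2 + cos (ψ y))
      (by have := hψ.continuous; fun_prop) (fun y hy => ?_) ?_ hx
    · refine ((((hode y hy).pow 2).div_const 2).add ((hψ y).hasDerivAt.cos)).congr_deriv ?_
      simp only [Nat.cast_ofNat]
      ring
    · simpa using ((hlim'.pow 2).div_const 2).add ((continuous_cos.tendsto _).comp hlim)
  rw [mul_pow, sin_sq_eq_half_sub, show 2 * (ψ x / 2) = ψ x by ring]
  linarith

/-- The sign cannot switch because `ψ' - 2 sin (ψ / 2)` solves a linear ODE. -/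
lemma exists_sign_deriv_eq_mul_two_sin_half (hψ : Differentiable ℝ ψ)
    (hψ' : Continuous (deriv ψ)) (hode : ∀ x, L < x → HasDerivAt (deriv ψ) (sin (ψ x)) x)
    (hlim : Tendsto ψ atTop (𝓝 (2 * π))) (hlim' : Tendsto (deriv ψ) atTop (𝓝 0)) :
    ∃ σ : ℝ, (σ = 1 ∨ σ = -1) ∧ ∀ x, L ≤ x → deriv ψ x = σ * (2 * sin (ψ x / 2)) := by
  have hcont : Continuous fun x => 2 * sin (ψ x / 2) := by
    have := hψ.continuous; fun_prop
  have hprod (x : ℝ) (hx : L ≤ x) :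
      (deriv ψ x - 2 * sin (ψ x / 2)) * (deriv ψ x + 2 * sin (ψ x / 2)) = 0 := by
    linear_combination deriv_sq_eq_of_tendsto hψ hψ' hode hlim hlim' hx
  by_cases hzero : ∃ x₀, L < x₀ ∧ deriv ψ x₀ - 2 * sin (ψ x₀ / 2) = 0
  · obtain ⟨x₀, hx₀, hu₀⟩ := hzero
    have hu (x : ℝ) (hx : L < x) : HasDerivAt (fun y => deriv ψ y - 2 * sin (ψ y / 2))
        (-cos (ψ x / 2) * (deriv ψ x - 2 * sin (ψ x / 2))) x := by
      refine ((hode x hx).sub ((((hψ x).hasDerivAt.div_const 2).sin).const_mul 2)).congr_deriv ?_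
      rw [sin_eq_two_mul_sin_half_mul_cos_half (ψ x)]
      ring
    have hlip (t : ℝ) : LipschitzWith 1 fun y : ℝ => -cos (ψ t / 2) * y :=
      (lipschitzWith_smul (-cos (ψ t / 2))).weaken <| by
        rw [← NNReal.coe_le_coe, coe_nnnorm, norm_neg]; exact abs_cos_le_one _
    have hu_zero := (eqOn_Ioi_of_hasDerivAt hlip hx₀ hu (g := fun _ => 0)
      (fun t _ => by simpa using hasDerivAt_const t (0 : ℝ)) hu₀).Ici_of_Ioi
      (hψ'.sub hcont) continuous_const
    exact ⟨1, Or.inl rfl, fun x hx => by linarith [hu_zero hx]⟩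
  · push Not at hzero
    have hw_zero := EqOn.Ici_of_Ioi (f := fun x => deriv ψ x + 2 * sin (ψ x / 2))
      (g := fun _ => 0)
      (fun x (hx : L < x) => (mul_eq_zero.1 (hprod x hx.le)).resolve_left (hzero x hx))
      (hψ'.add hcont) continuous_const
    exact ⟨-1, Or.inr rfl, fun x hx => by linarith [hw_zero hx]⟩

theorem eq_φ₀_on_Ici_or_two_pi_le (hψ : Differentiable ℝ ψ) (hψ' : Continuous (deriv ψ))
    (hode : ∀ x, L < x → HasDerivAt (deriv ψ) (sin (ψ x)) x)
    (hlim : Tendsto ψ atTop (𝓝 (2 * π))) (hlim' : Tendsto (deriv ψ) atTop (𝓝 0)) :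
    (deriv ψ L = 2 * sin (ψ L / 2) ∧ ∃ r, ∀ x, L ≤ x → ψ x = φ₀ (x + r)) ∨
      (2 * π ≤ ψ L ∧ deriv ψ L ≤ 0) := by
  obtain ⟨σ, hσ, hfirst⟩ := exists_sign_deriv_eq_mul_two_sin_half hψ hψ' hode hlim hlim'
  obtain ⟨X, hψX, hX⟩ := ((hlim.eventually (Ioo_mem_nhds (by positivity : 0 < 2 * π)
    (by linarith [pi_pos] : 2 * π < 4 * π))).and (eventually_gt_atTop L)).exists
  have hlimit {g : ℝ → ℝ} {c : ℝ} (hg : EqOn ψ g (Ioi L)) (hgc : Tendsto g atTop (𝓝 c)) :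
      c = 2 * π :=
    tendsto_nhds_unique (hgc.congr' ((eventually_gt_atTop L).mono fun x hx => (hg hx).symm)) hlim
  rcases eqOn_of_hasDerivAt_mul_two_sin_half hX hψX
    (fun x hx => hfirst x hx.le ▸ (hψ x).hasDerivAt) with ⟨r, hr⟩ | hr | ⟨r, hr⟩
  · rcases hσ with rfl | rfl
    · simp only [one_mul] at hr hfirst
      exact Or.inl ⟨hfirst L le_rfl, r, fun x hx =>
        hr.Ici_of_Ioi hψ.continuous (by fun_prop) hx⟩
    · simp only [neg_mul, one_mul] at hr
      have := hlimit hr (tendsto_φ₀_atBot.comp (tendsto_atBot_add_const_right _ r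
        tendsto_neg_atTop_atBot))
      linarith [pi_pos]
  · have hL := hr.Ici_of_Ioi hψ.continuous continuous_const (le_refl L)
    refine Or.inr ⟨hL.ge, ?_⟩
    rw [hfirst L le_rfl, hL, mul_div_cancel_left₀ π two_ne_zero, sin_pi]
    simp
  · rcases hσ with rfl | rfl
    · simp only [neg_mul, one_mul] at hr hfirst
      have hL := hr.Ici_of_Ioi hψ.continuous (by fun_prop) (le_refl L)
      refine Or.inr ⟨by linarith [hL, φ₀_pos (-L + r)], ?_⟩
      rw [hfirst L le_rfl, hL, add_div, mul_div_cancel_left₀ π two_ne_zero, add_comm, sin_add_pi]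
      linarith [sin_half_φ₀_pos (-L + r)]
    · simp only [neg_neg, one_mul] at hr
      have := hlimit hr (tendsto_const_nhds.add
        (tendsto_φ₀_atTop.comp (tendsto_atTop_add_const_right _ r tendsto_id)))
      linarith [pi_pos]

theorem eq_φ₀_on_Iic_or_nonpos (hψ : Differentiable ℝ ψ) (hψ' : Continuous (deriv ψ))
    (hode : ∀ x, x < -L → HasDerivAt (deriv ψ) (sin (ψ x)) x)
    (hlim : Tendsto ψ atBot (𝓝 0)) (hlim' : Tendsto (deriv ψ) atBot (𝓝 0)) :
    (deriv ψ (-L) = 2 * sin (ψ (-L) / 2) ∧ ∃ r, ∀ x, x ≤ -L → ψ x = φ₀ (x + r)) ∨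
      (ψ (-L) ≤ 0 ∧ deriv ψ (-L) ≤ 0) := by
  set χ : ℝ → ℝ := fun x => 2 * π - ψ (-x)
  have hχ (x : ℝ) : HasDerivAt χ (deriv ψ (-x)) x :=
    (((hψ (-x)).hasDerivAt.comp x (hasDerivAt_neg x)).const_sub (2 * π)).congr_deriv (by ring)
  have hχ' : deriv χ = fun x => deriv ψ (-x) := funext fun x => (hχ x).deriv
  have hode' (x : ℝ) (hx : L < x) : HasDerivAt (deriv χ) (sin (χ x)) x := by
    have hsin : sin (χ x) = -sin (ψ (-x)) := sin_two_pi_sub _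
    rw [hχ', hsin]
    exact ((hode (-x) (neg_lt_neg hx)).comp x (hasDerivAt_neg x)).congr_deriv (by ring)
  rcases eq_φ₀_on_Ici_or_two_pi_le (fun x => (hχ x).differentiableAt)
      (hχ' ▸ hψ'.comp continuous_neg) hode'
      (by simpa using (hlim.comp tendsto_neg_atTop_atBot).const_sub (2 * π))
      (hχ' ▸ hlim'.comp tendsto_neg_atTop_atBot) with ⟨hderiv, r, hr⟩ | ⟨hχL, hderiv⟩
  · refine Or.inl ⟨?_, -r, fun x hx => ?_⟩
    · have hχL : χ L / 2 = π - ψ (-L) / 2 := by simp only [χ]; ring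
      rwa [hχ', hχL, sin_pi_sub] at hderiv
    · have := hr (-x) (le_neg.1 hx)
      rw [show -x + r = -(x + -r) by ring, φ₀_neg] at this
      simp only [χ, neg_neg] at this
      linarith
  · refine Or.inr ⟨by simp only [χ] at hχL; linarith, ?_⟩
    rwa [hχ'] at hderiv

end Tail

namespace IsPinnedFluxon

variable {L d γ : ℝ} {φ : ℝ → ℝ}

lemma differentiable (hφ : IsPinnedFluxon L d γ φ) : Differentiable ℝ φ :=
  hφ.1.differentiable one_ne_zero

lemma continuous_deriv (hφ : IsPinnedFluxon L d γ φ) : Continuous (deriv φ) :=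
  (contDiff_one_iff_deriv.1 hφ.1).2

lemma hasDerivAt_deriv (hφ : IsPinnedFluxon L d γ φ) {x : ℝ} (hx : x ≠ -L) (hx' : x ≠ L) :
    HasDerivAt (deriv φ) (Dfun L d x * sin (φ x) - γ) x := by
  obtain ⟨φ'', hφ'', heq⟩ := hφ.2.1 x hx hx'
  rwa [show φ'' = Dfun L d x * sin (φ x) - γ by linarith] at hφ''

lemma affine_on_defect (hφ : IsPinnedFluxon L 0 0 φ) {x : ℝ} (hx : x ∈ Icc (-L) L) :
    deriv φ x = deriv φ (-L) ∧ φ x = φ (-L) + deriv φ (-L) * (x + L) := by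
  have hflat (y : ℝ) (hy : y ∈ Ioo (-L) x) : HasDerivAt (deriv φ) 0 y := by
    have hy' : |y| < L := abs_lt.2 ⟨hy.1, hy.2.trans_le hx.2⟩
    simpa [Dfun_of_abs_lt hy'] using hφ.hasDerivAt_deriv hy.1.ne' (hy.2.trans_le hx.2).ne
  have hconst := eq_of_hasDerivAt_zero_on_Ioo hx.1 hφ.continuous_deriv.continuousOn hflat
  refine ⟨hconst, ?_⟩
  have := eq_of_hasDerivAt_zero_on_Ioo (f := fun y => φ y - deriv φ (-L) * y) hx.1
    (by have := hφ.differentiable.continuous; fun_prop) fun y hy => ?_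
  · linarith
  · refine ((hφ.differentiable y).hasDerivAt.sub ((hasDerivAt_id y).const_mul _)).congr_deriv ?_
    rw [eq_of_hasDerivAt_zero_on_Ioo hy.1.le (hφ.continuous_deriv.continuousOn)
      fun t ht => hflat t ⟨ht.1, ht.2.trans hy.2⟩]
    simp

lemma eq_φ₀_on_tails (hL : 0 < L) (hφ : IsPinnedFluxon L 0 0 φ) :
    (deriv φ (-L) = 2 * sin (φ (-L) / 2) ∧ ∃ r, ∀ x, x ≤ -L → φ x = φ₀ (x + r)) ∧
      (deriv φ L = 2 * sin (φ L / 2) ∧ ∃ r, ∀ x, L ≤ x → φ x = φ₀ (x + r)) := by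
  have hbot : Tendsto φ atBot (𝓝 0) := arcsin_zero ▸ hφ.2.2.1
  have htop : Tendsto φ atTop (𝓝 (2 * π)) := by simpa using hφ.2.2.2.1
  have hode {x : ℝ} (hx : L < |x|) : HasDerivAt (deriv φ) (sin (φ x)) x := by
    simpa [Dfun_of_le_abs hx.le] using
      hφ.hasDerivAt_deriv (x := x) (fun h => by simp [h, abs_of_pos hL] at hx)
        (fun h => by simp [h, abs_of_pos hL] at hx)
  obtain ⟨hslope, hφL⟩ := hφ.affine_on_defect (x := L) ⟨by linarith, le_rfl⟩
  rcases eq_φ₀_on_Iic_or_nonpos (L := L) hφ.differentiable hφ.continuous_deriv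
      (fun x hx => hode (by rw [abs_of_neg (by linarith)]; linarith)) hbot hφ.2.2.2.2.1 with
    hleft | ⟨hleft, hleft'⟩ <;>
  rcases eq_φ₀_on_Ici_or_two_pi_le (L := L) hφ.differentiable hφ.continuous_deriv
      (fun x hx => hode (by rw [abs_of_pos (by linarith)]; linarith)) htop hφ.2.2.2.2.2 with
    hright | ⟨hright, hright'⟩
  · exact ⟨hleft, hright⟩
  · obtain ⟨hderiv, r, hr⟩ := hleft
    rw [hr _ le_rfl] at hderiv
    linarith [sin_half_φ₀_pos (-L + r)]
  · obtain ⟨hderiv, r, hr⟩ := hright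
    rw [hr _ le_rfl] at hderiv
    linarith [sin_half_φ₀_pos (L + r)]
  · nlinarith [pi_pos]

theorem eq_pinnedProfile {θ xs : ℝ} (hL : 0 < L)
    (hθ : θ ∈ Icc 0 π) (hLθ : 2 * L * sin (θ / 2) = π - θ) (hxs : φ₀ (-L + xs) = θ)
    (hφ : IsPinnedFluxon L 0 0 φ) : φ = pinnedProfile L θ xs := by
  obtain ⟨⟨hsl, r, hr⟩, ⟨hsr, r', hr'⟩⟩ := hφ.eq_φ₀_on_tails hL
  obtain ⟨hslope, hφL⟩ := hφ.affine_on_defect (x := L) ⟨by linarith, le_rfl⟩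
  have ha : φ (-L) = φ₀ (-L + r) := hr _ le_rfl
  have hb : φ L = φ₀ (L + r') := hr' _ le_rfl
  have hs : 0 < deriv φ (-L) := by rw [hsl, ha]; linarith [sin_half_φ₀_pos (-L + r)]
  have hab : φ (-L) / 2 + φ L / 2 = π :=
    add_eq_pi_of_sin_eq_sin (by rw [ha]; linarith [φ₀_pos (-L + r)])
      (by rw [hb]; linarith [φ₀_lt_two_pi (L + r')]) (by nlinarith)
      (by linarith [hslope, hsl, hsr])
  have hLs : L * deriv φ (-L) = π - φ (-L) := by nlinarith
  have hangle : φ (-L) = θ := (strictMonoOn_pinningAngle hL.le).injOn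
    ⟨by rw [ha]; linarith [φ₀_pos (-L + r)], by nlinarith [mul_pos hL hs]⟩ hθ
    (show 2 * L * sin (φ (-L) / 2) + φ (-L) = 2 * L * sin (θ / 2) + θ by
      rw [hLθ]; rw [hsl] at hLs; linarith)
  have hr_eq : r = xs := by
    have := φ₀_strictMono.injective (ha.symm.trans (hangle.trans hxs.symm))
    linarith
  have hr'_eq : r' = -xs := by
    have := φ₀_strictMono.injective (hb.symm.trans (by
      rw [φ₀_sub_of_φ₀_neg_add hxs]; linarith) : φ₀ (L + r') = φ₀ (L - xs))
    linarith
  funext x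
  simp only [pinnedProfile]
  split_ifs with hleft hright
  · rw [hr x hleft, hr_eq]
  · rw [(hφ.affine_on_defect ⟨by linarith, hright.le⟩).2, hangle,
      show (π - θ) / L = deriv φ (-L) by rw [← hangle, ← hLs]; field_simp]
    linarith
  · rw [hr' x (not_lt.1 hright), hr'_eq, sub_eq_add_neg]

end IsPinnedFluxon

/-- For `γ = 0`, `d = 0` and any half-length `L > 0`: the equation
`L = (π − arccos(1−h))/√(2h)` has a unique solution `h ∈ (0,2)`, there is a unique
pinned fluxon for parameters `(L, 0, 0)`, and, for the shift `x*` with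
`φ₀(−L + x*) = arccos(1−h)`, the explicit piecewise function
(`φ₀(x+x*)` for `x ≤ −L`, linear with slope `(π − arccos(1−h))/L` through `(0, π)`
inside the defect, `φ₀(x−x*)` for `x ≥ L`) is a pinned fluxon for `(L, 0, 0)`. -/
theorem stmt2 (L : ℝ) (hL : 0 < L) :
    (∃! h : ℝ, h ∈ Set.Ioo (0 : ℝ) 2 ∧
        L = (π - Real.arccos (1 - h)) / Real.sqrt (2 * h)) ∧
    (∃! φ : ℝ → ℝ, IsPinnedFluxon L 0 0 φ) ∧
    (∀ h xs : ℝ, h ∈ Set.Ioo (0 : ℝ) 2 →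
      L = (π - Real.arccos (1 - h)) / Real.sqrt (2 * h) →
      φ₀ (-L + xs) = Real.arccos (1 - h) →
      IsPinnedFluxon L 0 0 (fun x =>
        if x ≤ -L then φ₀ (x + xs)
        else if x < L then π + ((π - Real.arccos (1 - h)) / L) * x
        else φ₀ (x - xs))) := by
  obtain ⟨θ, ⟨hθ, hLθ⟩, -⟩ := existsUnique_pinningAngle hL
  obtain ⟨ξ, hξ⟩ := exists_φ₀_eq (y := θ) ⟨hθ.1, by linarith [hθ.2, pi_pos]⟩
  have hxs : φ₀ (-L + (ξ + L)) = θ := by rw [show -L + (ξ + L) = ξ by ring, hξ]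
  refine ⟨existsUnique_pinningLength hL, ⟨pinnedProfile L θ (ξ + L),
    isPinnedFluxon_pinnedProfile hL hLθ hxs,
    fun φ hφ => hφ.eq_pinnedProfile hL (Ioo_subset_Icc_self hθ) hLθ hxs⟩,
    fun h xs hh hLh hxs => isPinnedFluxon_pinnedProfile hL ((pinningLength_eq_iff hh).1 hLh) hxs⟩
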